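/- Let f ∈ Lip₁(ℝ) and {f_n} ⊂ Lip₁(ℝ) with |f − f_n|_H → 0 as n → ∞, and let μ ∈ P₁(ℝ). Then ∫_ℝ f_n dμ → ∫_ℝ f dμ as n → ∞. In particular, for each x ∈ ℝ one has (∫₀ˣ |f'(y) − f_n'(y)| dy)² ≤ |x| e^{|x|} |f − f_n|²_H and |∫₀ˣ |f'(y) − f_n'(y)| dy| ≤ 2|x|. -/

import Mathlib

open MeasureTheory ProbabilityTheory Set Filter

noncomputable section

/-- The σ-algebra on probability measures on `ℝ`, inherited from the canonical
σ-algebra on measures (generated by evaluation maps). -/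
instance : MeasurableSpace (ProbabilityMeasure ℝ) :=
  MeasurableSpace.comap ((↑) : ProbabilityMeasure ℝ → Measure ℝ) inferInstance

/-- The 1-Wasserstein distance between two probability measures on `ℝ`,
defined as the infimum of `E|ξ₁ - ξ₂|` over all couplings. -/
def W1 (μ ν : ProbabilityMeasure ℝ) : ℝ :=
  sInf { c | ∃ ρ : Measure (ℝ × ℝ), IsProbabilityMeasure ρ ∧
      ρ.map Prod.fst = (μ : Measure ℝ) ∧ ρ.map Prod.snd = (ν : Measure ℝ) ∧
      c = ∫ p, |p.1 - p.2| ∂ρ }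

/-- Real functions on `ℝ` that are Lipschitz with constant 1. -/
def Lip1 : Set (ℝ → ℝ) := { φ | LipschitzWith 1 φ }

/-- The Dirac point mass at `x`, as a probability measure. -/
def dirac1 (x : ℝ) : ProbabilityMeasure ℝ := ⟨Measure.dirac x, inferInstance⟩

/-- A probability measure on `ℝ` has a finite first moment. -/
def FiniteFirstMoment (μ : ProbabilityMeasure ℝ) : Prop :=
  Integrable (fun z : ℝ => |z|) (μ : Measure ℝ)

/-- The type of coefficients `σ, h : [0,T] × C_T × C_T × C_T(P₁) → ℝ`. -/
abbrev Coeff : Type :=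
  ℝ → (ℝ → ℝ) → (ℝ → ℝ) → (ℝ → ProbabilityMeasure ℝ) → ℝ

/-- The path `x` stopped at time `t`, i.e. `s ↦ x (s ∧ t)`. -/
def stopP {α : Type*} (x : ℝ → α) (t : ℝ) : ℝ → α := fun s => x (min s t)

/-- running supremum over `[0,t]` of the distance between two real paths. -/
def pathSup (x x' : ℝ → ℝ) (t : ℝ) : ℝ := ⨆ s : Icc (0:ℝ) t, |x s.1 - x' s.1|

/-- running supremum over `[0,t]` of the `W₁`-distance between two measure paths. -/
def measSup (μ μ' : ℝ → ProbabilityMeasure ℝ) (t : ℝ) : ℝ :=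
  ⨆ s : Icc (0:ℝ) t, W1 (μ s.1) (μ' s.1)

variable {Ω : Type*} [mΩ : MeasurableSpace Ω]

/-- running supremum `ξ*_t = sup_{s ≤ t} |ξ_s|` of a process. -/
def runSup (ξ : ℝ → Ω → ℝ) (t : ℝ) (ω : Ω) : ℝ := ⨆ s : Icc (0:ℝ) t, |ξ s.1 ω|

/-- The natural filtration `F^Y_t = σ{Y_s : s ≤ t}` of a process `Y`. -/
def natFilt (Y : ℝ → Ω → ℝ) (t : ℝ) : MeasurableSpace Ω :=
  ⨆ s ∈ Icc (0:ℝ) t, MeasurableSpace.comap (Y s) inferInstance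

/-- A process `M` is a martingale on `[0,T]` with respect to the family of
σ-algebras `F` and the measure `P`. -/
def MartOn (T : ℝ) (P : Measure Ω) (F : ℝ → MeasurableSpace Ω) (M : ℝ → Ω → ℝ) : Prop :=
  (∀ t ∈ Icc (0:ℝ) T, Integrable (M t) P ∧ StronglyMeasurable[F t] (M t)) ∧
  ∀ s t : ℝ, s ∈ Icc (0:ℝ) T → t ∈ Icc (0:ℝ) T → s ≤ t → condExp (F s) P (M t) =ᵐ[P] M s

/-- `(B¹, B²)` is a two-dimensional Brownian motion on `[0,T]` with respect to
the filtration `F` under `P`. -/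
structure IsBM2 (T : ℝ) (P : Measure Ω) (F : ℝ → MeasurableSpace Ω)
    (B1 B2 : ℝ → Ω → ℝ) : Prop where
  adapted : ∀ t ∈ Icc (0:ℝ) T, StronglyMeasurable[F t] (B1 t) ∧ StronglyMeasurable[F t] (B2 t)
  start : ∀ᵐ ω ∂P, B1 0 ω = 0 ∧ B2 0 ω = 0
  cont : ∀ᵐ ω ∂P, ContinuousOn (fun t => B1 t ω) (Icc 0 T) ∧
      ContinuousOn (fun t => B2 t ω) (Icc 0 T)
  incr_law : ∀ s t : ℝ, 0 ≤ s → s ≤ t → t ≤ T →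
    P.map (fun ω => (B1 t ω - B1 s ω, B2 t ω - B2 s ω)) =
      (gaussianReal 0 (t - s).toNNReal).prod (gaussianReal 0 (t - s).toNNReal)
  incr_indep : ∀ s t : ℝ, 0 ≤ s → s ≤ t → t ≤ T →
    Indep (MeasurableSpace.comap (fun ω => (B1 t ω - B1 s ω, B2 t ω - B2 s ω))
      inferInstance) (F s) P

/-- Assumption (A1): the coefficients `σ, h` are bounded, progressively
measurable (measurable and non-anticipative in the path variables), and
Lipschitz in `(x, μ)`, uniformly in `(t, y)`, with respect to the sup-norm on
paths and the `W₁`-distance on measures. -/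
structure A1 (T : ℝ) (σc hc : Coeff) : Prop where
  bddσ : ∃ K, ∀ t x y μ, |σc t x y μ| ≤ K
  bddh : ∃ K, ∀ t x y μ, |hc t x y μ| ≤ K
  measσ : Measurable fun p : ℝ × (ℝ → ℝ) × (ℝ → ℝ) × (ℝ → ProbabilityMeasure ℝ) =>
      σc p.1 p.2.1 p.2.2.1 p.2.2.2
  meash : Measurable fun p : ℝ × (ℝ → ℝ) × (ℝ → ℝ) × (ℝ → ProbabilityMeasure ℝ) =>
      hc p.1 p.2.1 p.2.2.1 p.2.2.2
  nonantσ : ∀ t x y μ, σc t x y μ = σc t (stopP x t) (stopP y t) (stopP μ t)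
  nonanth : ∀ t x y μ, hc t x y μ = hc t (stopP x t) (stopP y t) (stopP μ t)
  lip : ∃ C > 0, ∀ t ∈ Icc (0:ℝ) T, ∀ x x' y μ μ',
      |σc t x y μ - σc t x' y μ'| ≤ C * (pathSup x x' t + measSup μ μ' t) ∧
      |hc t x y μ - hc t x' y μ'| ≤ C * (pathSup x x' t + measSup μ μ' t)

/-- A function `f = f(t,x)` of class `C^{1,2}_b([0,T] × ℝ)`: bounded and
continuous, with bounded continuous derivatives `∂_t f`, `∂_x f`, `∂²_{xx} f`. -/
structure C12b (f : ℝ → ℝ → ℝ) : Prop where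
  cont : Continuous fun p : ℝ × ℝ => f p.1 p.2
  bdd : ∃ K, ∀ t x, |f t x| ≤ K
  dt : ∃ ft : ℝ → ℝ → ℝ, (∀ t x, HasDerivAt (fun s => f s x) (ft t x) t) ∧
      Continuous (fun p : ℝ × ℝ => ft p.1 p.2) ∧ ∃ K, ∀ t x, |ft t x| ≤ K
  dx : ∃ fx fxx : ℝ → ℝ → ℝ,
      (∀ t x, HasDerivAt (fun z => f t z) (fx t x) x) ∧
      (∀ t x, HasDerivAt (fun z => fx t z) (fxx t x) x) ∧
      Continuous (fun p : ℝ × ℝ => fx p.1 p.2) ∧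
      Continuous (fun p : ℝ × ℝ => fxx p.1 p.2) ∧
      (∃ K, ∀ t x, |fx t x| ≤ K) ∧ (∃ K, ∀ t x, |fxx t x| ≤ K)

/-- Assumption (A2): the observation coefficient has the separated form
`h(t,x,y_{·∧t}) = Σ_{i=1}^N f_i(t, x_t) g_i(t, y_{·∧t})` with `f_i ∈ C^{1,2}_b`
and `g_i` bounded measurable; in particular `h` depends on the state path only
through its current value and does not depend on the measure variable. -/
def A2 (hc : Coeff) : Prop :=
  ∃ (N : ℕ) (f : Fin N → ℝ → ℝ → ℝ) (g : Fin N → ℝ → (ℝ → ℝ) → ℝ),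
    (∀ i, C12b (f i)) ∧
    (∀ i, Measurable (fun p : ℝ × (ℝ → ℝ) => g i p.1 p.2) ∧
      (∃ K, ∀ t y, |g i t y| ≤ K) ∧ ∀ t y, g i t y = g i t (stopP y t)) ∧
    ∀ t x y μ, hc t x y μ = ∑ i, f i t (x t) * g i t y

/-- Evaluation `σ(t, X_{·∧t}(ω), Y_{·∧t}(ω), μ_{·∧t}(ω))` of a coefficient
along the (stopped) paths of the processes `X, Y, μ`. -/
def coefAt (σc : Coeff) (X Y : ℝ → Ω → ℝ) (μ : ℝ → Ω → ProbabilityMeasure ℝ)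
    (t : ℝ) (ω : Ω) : ℝ :=
  σc t (fun r => X (min r t) ω) (fun r => Y (min r t) ω) (fun r => μ (min r t) ω)

/-- The process `μ` of probability measures is adapted to the filtration
generated by `Y`. -/
def AdaptedMeas (T : ℝ) (Y : ℝ → Ω → ℝ) (μ : ℝ → Ω → ProbabilityMeasure ℝ) : Prop :=
  ∀ t ∈ Icc (0:ℝ) T, Measurable[natFilt Y t] (μ t)

/-- `t ↦ μ_t` is continuous on `[0,T]` for the `W₁`-distance. -/
def W1ContOn (T : ℝ) (μ : ℝ → ProbabilityMeasure ℝ) : Prop :=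
  ∀ t ∈ Icc (0:ℝ) T, ∀ ε > 0, ∃ δ > 0, ∀ s ∈ Icc (0:ℝ) T, |s - t| < δ →
    W1 (μ s) (μ t) < ε

/-- Membership in `S^p_{F^Y}(P₁)` : continuous (in `W₁`), `F^Y`-adapted,
`P₁(ℝ)`-valued processes whose running supremum of the `W₁`-distance to `δ₀`
has a finite `p`-th moment. -/
def MemSp (p T : ℝ) (Q0 : Measure Ω) (Y : ℝ → Ω → ℝ)
    (μ : ℝ → Ω → ProbabilityMeasure ℝ) : Prop :=
  AdaptedMeas T Y μ ∧
  (∀ᵐ ω ∂Q0, W1ContOn T (fun t => μ t ω)) ∧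
  Integrable (fun ω => (⨆ t : Icc (0:ℝ) T, W1 (μ t.1 ω) (dirac1 0)) ^ p) Q0

/-- `X` is a (weak, martingale-problem formulation) solution of
`dX_t = σ(t, X_{·∧t}, Y_{·∧t}, μ_{·∧t}) dB¹_t`, `X_0 = x` : `X` is a continuous
adapted martingale started at `x` whose quadratic variation is
`∫₀ᵗ σ(...)² ds`, whose covariation with `B¹` is `∫₀ᵗ σ(...) ds` and whose
covariation with `Y` vanishes. -/
structure SolvesX (T x : ℝ) (σc : Coeff) (Q0 : Measure Ω) (F : ℝ → MeasurableSpace Ω)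
    (B1 Y : ℝ → Ω → ℝ) (μ : ℝ → Ω → ProbabilityMeasure ℝ) (X : ℝ → Ω → ℝ) : Prop where
  start : ∀ᵐ ω ∂Q0, X 0 ω = x
  cont : ∀ᵐ ω ∂Q0, ContinuousOn (fun t => X t ω) (Icc 0 T)
  mart : MartOn T Q0 F X
  qv : MartOn T Q0 F fun t ω => (X t ω) ^ 2 - ∫ s in (0:ℝ)..t, (coefAt σc X Y μ s ω) ^ 2
  covB1 : MartOn T Q0 F fun t ω => X t ω * B1 t ω - ∫ s in (0:ℝ)..t, coefAt σc X Y μ s ω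
  covY : MartOn T Q0 F fun t ω => X t ω * Y t ω

/-- `L` is a (martingale-problem formulation) solution of
`dL_t = h(t, X_{·∧t}, Y_{·∧t}, μ_{·∧t}) L_t dY_t`, `L_0 = 1` : `L` is a
positive continuous adapted martingale started at `1` with quadratic variation
`∫₀ᵗ (h L)² ds`, covariation `∫₀ᵗ h L ds` with `Y` and vanishing covariation
with `B¹`. -/
structure SolvesL (T : ℝ) (hc : Coeff) (Q0 : Measure Ω) (F : ℝ → MeasurableSpace Ω)
    (B1 Y X : ℝ → Ω → ℝ) (μ : ℝ → Ω → ProbabilityMeasure ℝ) (L : ℝ → Ω → ℝ) : Prop where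
  start : ∀ᵐ ω ∂Q0, L 0 ω = 1
  cont : ∀ᵐ ω ∂Q0, ContinuousOn (fun t => L t ω) (Icc 0 T)
  pos : ∀ᵐ ω ∂Q0, ∀ t ∈ Icc (0:ℝ) T, 0 < L t ω
  mart : MartOn T Q0 F L
  qv : MartOn T Q0 F fun t ω =>
      (L t ω) ^ 2 - ∫ s in (0:ℝ)..t, (coefAt hc X Y μ s ω * L s ω) ^ 2
  covY : MartOn T Q0 F fun t ω =>
      L t ω * Y t ω - ∫ s in (0:ℝ)..t, coefAt hc X Y μ s ω * L s ω
  covB1 : MartOn T Q0 F fun t ω => L t ω * B1 t ω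

/-- `ν` is (a version of) the image `T(μ)` of `μ` under the solution map:
`ν_t(A) = E^{Q⁰}[L^μ_t 1_{X^μ_t ∈ A} | F^Y_t] / E^{Q⁰}[L^μ_t | F^Y_t]`. -/
def IsSolMap (T : ℝ) (Q0 : Measure Ω) (Y X L : ℝ → Ω → ℝ)
    (ν : ℝ → Ω → ProbabilityMeasure ℝ) : Prop :=
  ∀ t ∈ Icc (0:ℝ) T, ∀ A : Set ℝ, MeasurableSet A →
    (fun ω => (((ν t ω : Measure ℝ) A).toReal)) =ᵐ[Q0]
      fun ω => (condExp (natFilt Y t) Q0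
          (fun ω' => A.indicator (fun _ => (1:ℝ)) (X t ω') * L t ω') ω) /
        (condExp (natFilt Y t) Q0 (L t) ω)

/-- `ν` is (a version of) the conditional law process `μ^{X|Y}` of `X` given the
filtration generated by `Y`, under the measure `P`. -/
def IsCondLaw (T : ℝ) (P : Measure Ω) (Y X : ℝ → Ω → ℝ)
    (ν : ℝ → Ω → ProbabilityMeasure ℝ) : Prop :=
  AdaptedMeas T Y ν ∧
  ∀ t ∈ Icc (0:ℝ) T, ∀ A : Set ℝ, MeasurableSet A →
    (fun ω => (((ν t ω : Measure ℝ) A).toReal)) =ᵐ[P]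
      condExp (natFilt Y t) P (fun ω' => A.indicator (fun _ => (1:ℝ)) (X t ω'))

end

/-!
By the fundamental theorem of calculus for Lipschitz functions,
`f z - g z = (f 0 - g 0) + ∫₀ᶻ (f' - g')`. On `Ι 0 z` the weight `e^{-|y|}` is at least
`e^{-|z|}`, so Cauchy–Schwarz gives `(∫₀ᶻ |f' - g'|)² ≤ |z| e^{|z|} |f - g|²_H`, hence
`|f z - f_n z| ≤ (1 + √(|z| e^{|z|})) |f - f_n|_H → 0`. Once `f_n 0` is close to `f 0`, the
1-Lipschitz `f_n` are dominated by `|f 0| + 1 + |z|`, which is `μ`-integrable, and dominated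
convergence concludes.
-/

open scoped NNReal Topology Interval

theorem sq_setIntegral_le_measureReal_mul_setIntegral_sq {α : Type*} [MeasurableSpace α]
    {μ : Measure α} {s : Set α} {g : α → ℝ} (hs : μ s ≠ ⊤) (hg : IntegrableOn g s μ)
    (hg2 : IntegrableOn (fun x => g x ^ 2) s μ) :
    (∫ x in s, g x ∂μ) ^ 2 ≤ μ.real s * ∫ x in s, g x ^ 2 ∂μ := by
  rcases eq_or_ne (μ s) 0 with h0 | h0
  · simp [Measure.restrict_eq_zero.2 h0]
  have hpos : 0 < μ.real s := ENNReal.toReal_pos h0 hs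
  have hjensen := (even_two.convexOn_pow (𝕜 := ℝ)).map_set_average_le
    (continuous_pow 2).continuousOn isClosed_univ h0 hs (by simp) hg hg2
  rw [setAverage_eq, setAverage_eq, smul_eq_mul, smul_eq_mul, mul_pow, inv_pow,
    ← div_eq_inv_mul, ← div_eq_inv_mul, div_le_div_iff₀ (by positivity) hpos] at hjensen
  exact le_of_mul_le_mul_right (hjensen.trans_eq (by ring)) hpos

theorem integrable_exp_neg_abs : Integrable fun y : ℝ => Real.exp (-|y|) := by
  have hneg : IntegrableOn (fun y : ℝ => Real.exp (-|y|)) (Iic 0) :=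
    (integrableOn_exp_Iic 0).congr_fun (fun y hy => by rw [abs_of_nonpos hy, neg_neg])
      measurableSet_Iic
  have hpos : IntegrableOn (fun y : ℝ => Real.exp (-|y|)) (Ioi 0) :=
    (exp_neg_integrableOn_Ioi 0 one_pos).congr_fun
      (fun y hy => by simp [abs_of_pos (mem_Ioi.1 hy)]) measurableSet_Ioi
  simpa using hneg.union hpos

theorem abs_le_abs_of_mem_uIoc_zero {x y : ℝ} (hy : y ∈ Ι 0 x) : |y| ≤ |x| := by
  rcases Set.mem_uIoc.1 hy with ⟨h1, h2⟩ | ⟨h1, h2⟩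
  · rwa [abs_of_pos h1, abs_of_pos (h1.trans_le h2)]
  · rw [abs_of_nonpos h2, abs_of_neg (h1.trans_le h2)]
    linarith

theorem sq_intervalIntegral_abs_le_mul_integral_sq_mul_exp_neg_abs {g : ℝ → ℝ} {C : ℝ}
    (hg : AEStronglyMeasurable g) (hC : ∀ y, |g y| ≤ C) (x : ℝ) :
    (∫ y in (0:ℝ)..x, |g y|) ^ 2 ≤ |x| * Real.exp |x| * ∫ y, g y ^ 2 * Real.exp (-|y|) := by
  have hg2 : Integrable fun y => g y ^ 2 * Real.exp (-|y|) := by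
    refine (integrable_exp_neg_abs.const_mul (C ^ 2)).mono' (by fun_prop)
      (Eventually.of_forall fun y => ?_)
    rw [norm_mul, Real.norm_of_nonneg (Real.exp_nonneg _), norm_pow, Real.norm_eq_abs]
    gcongr
    exact hC y
  have hfin : volume (Ι (0:ℝ) x) ≠ ⊤ := by simp [Real.volume_uIoc]
  have hgI : IntegrableOn g (Ι 0 x) :=
    Measure.integrableOn_of_bounded hfin hg (Eventually.of_forall fun y => hC y)
  have hgI2 : IntegrableOn (fun y => g y ^ 2) (Ι 0 x) :=
    Measure.integrableOn_of_bounded hfin (by fun_prop) (Eventually.of_forall fun y => by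
      simpa using pow_le_pow_left₀ (abs_nonneg _) (hC y) 2)
  have hlocal :
      ∫ y in Ι 0 x, g y ^ 2 ≤ Real.exp |x| * ∫ y in Ι 0 x, g y ^ 2 * Real.exp (-|y|) := by
    rw [← integral_const_mul]
    refine setIntegral_mono_on hgI2 (hg2.integrableOn.const_mul _) measurableSet_uIoc
      fun y hy => ?_
    have hweight : 1 ≤ Real.exp |x| * Real.exp (-|y|) := by
      rw [← Real.exp_add]
      exact Real.one_le_exp (by linarith [abs_le_abs_of_mem_uIoc_zero hy])
    calc g y ^ 2 ≤ g y ^ 2 * (Real.exp |x| * Real.exp (-|y|)) :=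
          le_mul_of_one_le_right (sq_nonneg _) hweight
      _ = Real.exp |x| * (g y ^ 2 * Real.exp (-|y|)) := by ring
  calc (∫ y in (0:ℝ)..x, |g y|) ^ 2 = (∫ y in Ι 0 x, |g y|) ^ 2 := by
        rw [← sq_abs, intervalIntegral.abs_integral_eq_abs_integral_uIoc, sq_abs]
    _ ≤ volume.real (Ι 0 x) * ∫ y in Ι 0 x, |g y| ^ 2 :=
        sq_setIntegral_le_measureReal_mul_setIntegral_sq hfin hgI.abs (by simpa using hgI2)
    _ = |x| * ∫ y in Ι 0 x, g y ^ 2 := by simp [measureReal_def, Real.volume_uIoc]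
    _ ≤ |x| * (Real.exp |x| * ∫ y in Ι 0 x, g y ^ 2 * Real.exp (-|y|)) := by gcongr
    _ ≤ |x| * Real.exp |x| * ∫ y, g y ^ 2 * Real.exp (-|y|) := by
        rw [← mul_assoc]
        exact mul_le_mul_of_nonneg_left
          (setIntegral_le_integral hg2 (Eventually.of_forall fun y => by positivity))
          (by positivity)

/-- `|f - g|²_H`, written with `f' - g'` rather than `(f - g)'`: they agree wherever `f` and `g`
are differentiable, i.e. almost everywhere for Lipschitz `f`, `g`. -/
noncomputable def sqDistH (f g : ℝ → ℝ) : ℝ :=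
  (f 0 - g 0) ^ 2 + ∫ y, (deriv f y - deriv g y) ^ 2 * Real.exp (-|y|)

theorem integral_sq_deriv_sub_mul_exp_le_sqDistH (f g : ℝ → ℝ) :
    ∫ y, (deriv f y - deriv g y) ^ 2 * Real.exp (-|y|) ≤ sqDistH f g :=
  le_add_of_nonneg_left (sq_nonneg _)

theorem sq_sub_apply_zero_le_sqDistH (f g : ℝ → ℝ) : (f 0 - g 0) ^ 2 ≤ sqDistH f g :=
  le_add_of_nonneg_right (integral_nonneg fun _ => by positivity)

section Lipschitz

variable {K : ℝ≥0} {f g : ℝ → ℝ}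

theorem LipschitzWith.integral_deriv_eq_sub (hf : LipschitzWith K f) (a b : ℝ) :
    ∫ y in a..b, deriv f y = f b - f a :=
  (hf.lipschitzOnWith (s := uIcc a b)).absolutelyContinuousOnInterval.integral_deriv_eq_sub

theorem LipschitzWith.intervalIntegrable_deriv (hf : LipschitzWith K f) (a b : ℝ) :
    IntervalIntegrable (deriv f) volume a b :=
  (hf.lipschitzOnWith (s := uIcc a b)).absolutelyContinuousOnInterval.intervalIntegrable_deriv

theorem LipschitzWith.abs_deriv_sub_deriv_le (hf : LipschitzWith K f) (hg : LipschitzWith K g)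
    (y : ℝ) : |deriv f y - deriv g y| ≤ 2 * K := by
  have hf' : |deriv f y| ≤ K := norm_deriv_le_of_lipschitz hf
  have hg' : |deriv g y| ≤ K := norm_deriv_le_of_lipschitz hg
  linarith [abs_sub (deriv f y) (deriv g y)]

theorem LipschitzWith.abs_intervalIntegral_abs_deriv_sub_le (hf : LipschitzWith K f)
    (hg : LipschitzWith K g) (x : ℝ) :
    |(∫ y in (0:ℝ)..x, |deriv f y - deriv g y|)| ≤ 2 * K * |x| := by
  simpa using intervalIntegral.norm_integral_le_of_norm_le_const
    (f := fun y => |deriv f y - deriv g y|) (a := 0) (b := x) fun y _ => by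
      simpa using hf.abs_deriv_sub_deriv_le hg y

theorem LipschitzWith.sq_intervalIntegral_abs_deriv_sub_le (hf : LipschitzWith K f)
    (hg : LipschitzWith K g) (x : ℝ) :
    (∫ y in (0:ℝ)..x, |deriv f y - deriv g y|) ^ 2 ≤ |x| * Real.exp |x| * sqDistH f g :=
  (sq_intervalIntegral_abs_le_mul_integral_sq_mul_exp_neg_abs (by fun_prop)
    (hf.abs_deriv_sub_deriv_le hg) x).trans
      (by gcongr; exact integral_sq_deriv_sub_mul_exp_le_sqDistH f g)

theorem LipschitzWith.abs_sub_le_mul_sqrt_sqDistH (hf : LipschitzWith K f)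
    (hg : LipschitzWith K g) (z : ℝ) :
    |f z - g z| ≤ (1 + √(|z| * Real.exp |z|)) * √(sqDistH f g) := by
  have hftc : f z - g z = (f 0 - g 0) + ∫ y in (0:ℝ)..z, (deriv f y - deriv g y) := by
    rw [intervalIntegral.integral_sub (hf.intervalIntegrable_deriv 0 z)
      (hg.intervalIntegrable_deriv 0 z), hf.integral_deriv_eq_sub, hg.integral_deriv_eq_sub]
    ring
  have hzero : |f 0 - g 0| ≤ √(sqDistH f g) :=
    Real.abs_le_sqrt (sq_sub_apply_zero_le_sqDistH f g)
  have hint : |∫ y in (0:ℝ)..z, (deriv f y - deriv g y)| ≤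
      √(|z| * Real.exp |z|) * √(sqDistH f g) := by
    rw [← Real.sqrt_mul (by positivity)]
    calc |∫ y in (0:ℝ)..z, (deriv f y - deriv g y)|
        ≤ |(∫ y in (0:ℝ)..z, |deriv f y - deriv g y|)| := by
          simpa using intervalIntegral.norm_integral_le_abs_integral_norm
            (f := fun y => deriv f y - deriv g y) (a := 0) (b := z) (μ := volume)
      _ ≤ _ := Real.abs_le_sqrt (hf.sq_intervalIntegral_abs_deriv_sub_le hg z)
  calc |f z - g z| ≤ |f 0 - g 0| + |∫ y in (0:ℝ)..z, (deriv f y - deriv g y)| :=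
        hftc ▸ abs_add_le _ _
    _ ≤ _ := by linarith

end Lipschitz

theorem tendsto_apply_of_tendsto_sqDistH {ι : Type*} {l : Filter ι} {K : ℝ≥0}
    {f : ℝ → ℝ} {F : ι → ℝ → ℝ} (hf : LipschitzWith K f) (hF : ∀ i, LipschitzWith K (F i))
    (h : Tendsto (fun i => sqDistH f (F i)) l (𝓝 0)) (z : ℝ) :
    Tendsto (fun i => F i z) l (𝓝 (f z)) := by
  have hbound :
      Tendsto (fun i => (1 + √(|z| * Real.exp |z|)) * √(sqDistH f (F i))) l (𝓝 0) := by
    simpa using h.sqrt.const_mul (1 + √(|z| * Real.exp |z|))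
  rw [tendsto_iff_norm_sub_tendsto_zero]
  refine squeeze_zero (fun i => norm_nonneg _) (fun i => ?_) hbound
  rw [Real.norm_eq_abs, abs_sub_comm]
  exact hf.abs_sub_le_mul_sqrt_sqDistH (hF i) z

theorem tendsto_integral_of_lipschitzWith {ι : Type*} {l : Filter ι} [l.IsCountablyGenerated]
    {K : ℝ≥0} {μ : Measure ℝ} [IsFiniteMeasure μ] (hμ : Integrable (fun z => |z|) μ)
    {f : ℝ → ℝ} {F : ι → ℝ → ℝ} (hF : ∀ i, LipschitzWith K (F i))
    (hlim : ∀ z, Tendsto (fun i => F i z) l (𝓝 (f z))) :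
    Tendsto (fun i => ∫ z, F i z ∂μ) l (𝓝 (∫ z, f z ∂μ)) := by
  have hbound : ∀ᶠ i in l, ∀ᵐ z ∂μ, ‖F i z‖ ≤ |f 0| + 1 + K * |z| := by
    filter_upwards [(hlim 0).abs.eventually (gt_mem_nhds (lt_add_one |f 0|))] with i hi
    refine Eventually.of_forall fun z => ?_
    have hlip : |F i z - F i 0| ≤ K * |z| := by
      simpa [Real.dist_eq] using (hF i).dist_le_mul z 0
    rw [Real.norm_eq_abs]
    linarith [abs_sub_abs_le_abs_sub (F i z) (F i 0)]
  exact tendsto_integral_filter_of_dominated_convergence _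
    (Eventually.of_forall fun i => (hF i).continuous.aestronglyMeasurable) hbound
    ((integrable_const _).add (hμ.const_mul _)) (Eventually.of_forall hlim)

/-- Convergence step in Lemma 2.1: if `f, f_n ∈ Lip₁(ℝ)` with
`|f − f_n|_ℍ → 0` and `μ ∈ P₁(ℝ)`, then `∫ f_n dμ → ∫ f dμ`; moreover, for
each `x ∈ ℝ`, `(∫₀ˣ |f'−f_n'| dy)² ≤ |x| e^{|x|} |f − f_n|²_ℍ` and
`|∫₀ˣ |f'−f_n'| dy| ≤ 2|x|`. -/
theorem lip_integral_convergence (f : ℝ → ℝ) (fn : ℕ → ℝ → ℝ)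
    (hf : f ∈ Lip1) (hfn : ∀ n, fn n ∈ Lip1)
    (hconv : Filter.Tendsto
      (fun n => (f 0 - fn n 0) ^ 2 +
        ∫ y, (deriv f y - deriv (fn n) y) ^ 2 * Real.exp (-|y|))
      Filter.atTop (nhds 0))
    (μ : ProbabilityMeasure ℝ) (hμ : FiniteFirstMoment μ) :
    Filter.Tendsto (fun n => ∫ z, fn n z ∂(μ : Measure ℝ)) Filter.atTop
      (nhds (∫ z, f z ∂(μ : Measure ℝ))) ∧
    ∀ (n : ℕ) (x : ℝ),
      (∫ y in (0:ℝ)..x, |deriv f y - deriv (fn n) y|) ^ 2 ≤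
        |x| * Real.exp |x| *
          ((f 0 - fn n 0) ^ 2 +
            ∫ y, (deriv f y - deriv (fn n) y) ^ 2 * Real.exp (-|y|)) ∧
      |(∫ y in (0:ℝ)..x, |deriv f y - deriv (fn n) y|)| ≤ 2 * |x| := by
  have hf : LipschitzWith 1 f := hf
  have hfn : ∀ n, LipschitzWith 1 (fn n) := hfn
  refine ⟨tendsto_integral_of_lipschitzWith hμ hfn
    (tendsto_apply_of_tendsto_sqDistH hf hfn hconv), fun n x => ⟨?_, ?_⟩⟩
  · exact hf.sq_intervalIntegral_abs_deriv_sub_le (hfn n) x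
  · simpa using hf.abs_intervalIntegral_abs_deriv_sub_le (hfn n) x
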